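/- Let Q be a finite set and T a set of unitary transformations of Q. The subsemigroup of transformations generated by T under composition is aperiodic (every element s satisfies s^(k+1) = s^k for some k ≥ 1) if and only if T contains no k-cyclic subset with k ≥ 3 (a subset {(q0→q1), …, (q_{k−1}→q0)} with q0,…,q_{k−1} pairwise distinct) and no subset of type T6 (six transformations (q0→q1), (q1→q0), (q1→q2), (q1→q3), (q2→q1), (q3→q1) for pairwise distinct q0, q1, q2, q3). -/

import Mathlib

/-!
Draw an edge `p → q` for every `(p→q) ∈ T`. A product of generators moves every point along a
walk, so if `sⁿ x = x` then the whole orbit of `x` lies in the strongly connected component `C`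
of `x`, and so does every intermediate point of the walks joining consecutive orbit points.
Without long cycles every edge inside `C` is bidirectional, and without `T6` no vertex of `C`
has three neighbours; hence `C` is a simple path. Numbering its vertices in order, every unitary
transformation, and therefore every element of the closure, is monotone on `C`, and a monotone
map cannot move a periodic point. Since `Q` is finite, `s` is aperiodic exactly when it fixes
all its periodic points.

Conversely, a long cycle `q₀ → ⋯ → q_{k-1} → q₀` yields a product permuting `q₁, …, q_{k-1}`
cyclically, and a `T6` configuration a product swapping `q₀` and `q₃`.
-/

/-- The unitary transformation `(p→q)`: sends `p` to `q` and fixes every other element. -/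
def unitaryT {Q : Type*} [DecidableEq Q] (p q : Q) : Function.End Q :=
  fun r => if r = p then q else r

open Function Relation

namespace Function.End

variable {α : Type*}

theorem mul_apply (f g : Function.End α) (a : α) : (f * g) a = f (g a) := rfl

theorem pow_succ_apply (f : Function.End α) (n : ℕ) (a : α) :
    (f ^ (n + 1)) a = f ((f ^ n) a) := by
  rw [pow_succ']; rfl

theorem pow_add_apply (f : Function.End α) (m n : ℕ) (a : α) :
    (f ^ (m + n)) a = (f ^ m) ((f ^ n) a) := by
  rw [pow_add]; rfl

theorem pow_mul_apply_of_pow_apply {f : Function.End α} {n : ℕ} {a : α} (h : (f ^ n) a = a)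
    (k : ℕ) : (f ^ (n * k)) a = a := by
  induction k with
  | zero => rfl
  | succ k ih => rw [Nat.mul_succ, pow_add_apply, h, ih]

theorem exists_pow_succ_eq_pow_iff [Finite α] (s : Function.End α) :
    (∃ k, 1 ≤ k ∧ s ^ (k + 1) = s ^ k) ↔ ∀ n x, 0 < n → (s ^ n) x = x → s x = x := by
  constructor
  · rintro ⟨k, -, hsk⟩ n x hn hx
    obtain ⟨j, hj⟩ : ∃ j, n * k = j + k :=
      ⟨n * k - k, (Nat.sub_add_cancel (Nat.le_mul_of_pos_left k hn)).symm⟩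
    calc s x = s ((s ^ (n * k)) x) := by rw [pow_mul_apply_of_pow_apply hx]
      _ = (s ^ (j + (k + 1))) x := by rw [← add_assoc, ← hj, pow_succ_apply]
      _ = x := by rw [pow_add, hsk, ← pow_add, ← hj, pow_mul_apply_of_pow_apply hx]
  · intro h
    have : Finite (Function.End α) := inferInstanceAs (Finite (α → α))
    obtain ⟨a, b, hab, heq⟩ := Set.finite_univ.exists_lt_map_eq_of_forall_mem
      (f := fun n : ℕ => s ^ n) fun _ => Set.mem_univ _
    refine ⟨a + 1, by omega, funext fun y => ?_⟩
    rw [pow_succ_apply]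
    refine h (b - a) _ (by omega) ?_
    rw [← pow_add_apply, show b - a + (a + 1) = b + 1 by omega, pow_succ, ← heq, ← pow_succ]

end Function.End

theorem apply_one_eq_apply_zero_of_periodic {β : Type*} [LinearOrder β] {f : ℕ → β}
    (hf : ∀ i j, f i ≤ f j → f (i + 1) ≤ f (j + 1)) {n : ℕ} (hn : 0 < n) (hper : f n = f 0) :
    f 1 = f 0 := by
  wlog h : f 0 ≤ f 1 generalizing β
  · exact this (β := βᵒᵈ) (fun i j hij => hf j i hij) hper (le_of_not_ge h)
  have hmono : Monotone f := monotone_nat_of_le_succ fun i => by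
    induction i with
    | zero => exact h
    | succ i ih => exact hf _ _ ih
  exact le_antisymm (hper ▸ hmono hn) h

section Relations

variable {α : Type*} {r : α → α → Prop}

/-- `i + 1` is taken in `Fin k`, so the last vertex is joined back to the first. -/
def HasLongCycle (r : α → α → Prop) : Prop :=
  ∃ (k : ℕ) (hk : 3 ≤ k) (q : Fin k → α), Injective q ∧
    ∀ i : Fin k, r (q i) (q (i + ⟨1, Nat.lt_of_lt_of_le (by decide) hk⟩))

def HasT6 (r : α → α → Prop) : Prop :=
  ∃ q0 q1 q2 q3 : α, q0 ≠ q1 ∧ q0 ≠ q2 ∧ q0 ≠ q3 ∧ q1 ≠ q2 ∧ q1 ≠ q3 ∧ q2 ≠ q3 ∧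
    r q0 q1 ∧ r q1 q0 ∧ r q1 q2 ∧ r q1 q3 ∧ r q2 q1 ∧ r q3 q1

theorem HasLongCycle.mono {s : α → α → Prop} (hrs : ∀ a b, r a b → s a b)
    (h : HasLongCycle r) : HasLongCycle s := by
  obtain ⟨k, hk, q, hq, hr⟩ := h
  exact ⟨k, hk, q, hq, fun i => hrs _ _ (hr i)⟩

theorem hasLongCycle_of_isChain {L : List α} (hnd : L.Nodup) (hch : L.IsChain r)
    (hlen : 3 ≤ L.length) (hclose : r L[L.length - 1] L[0]) : HasLongCycle r := by
  refine ⟨L.length, hlen, fun i => L[i], List.nodup_iff_injective_get.mp hnd, fun i => ?_⟩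
  have hval : ((i + ⟨1, by omega⟩ : Fin L.length) : ℕ) = (i + 1) % L.length := Fin.val_add _ _
  show r L[(i : ℕ)] L[((i + ⟨1, by omega⟩ : Fin L.length) : ℕ)]
  rcases Nat.lt_or_ge (i + 1) L.length with hi | hi
  · simpa only [hval, Nat.mod_eq_of_lt hi] using List.isChain_iff_getElem.mp hch i hi
  · have hi' : (i : ℕ) = L.length - 1 := by omega
    simpa only [hval, hi', Nat.sub_add_cancel (by omega : 1 ≤ L.length), Nat.mod_self]
      using hclose

theorem hasLongCycle_of_isChain_of_rel [Std.Symm r] {P : List α} (hnd : P.Nodup)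
    (hch : P.IsChain r) {i j : ℕ} (hij : i + 2 ≤ j) (hj : j < P.length) (hr : r P[i] P[j]) :
    HasLongCycle r := by
  refine hasLongCycle_of_isChain (L := (P.drop i).take (j + 1 - i))
    ((hnd.sublist (List.drop_sublist _ _)).sublist (List.take_sublist _ _))
    ((hch.drop i).take _) (by simp; omega) ?_
  have hmin : min (j + 1 - i) (P.length - i) = j + 1 - i := by omega
  simpa [hmin, show i + (j + 1 - i - 1) = j by omega] using Std.Symm.symm _ _ hr

theorem List.exists_nodup_isChain_cons_of_reflTransGen {a b : α} (h : ReflTransGen r a b) :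
    ∃ l, (a :: l).Nodup ∧ IsChain r (a :: l) ∧ (a :: l).getLast (cons_ne_nil _ _) = b := by
  induction h using ReflTransGen.head_induction_on with
  | refl => exact ⟨[], by simp, .singleton _, rfl⟩
  | @head a c hac _ ih =>
    obtain ⟨l, hnd, hch, hlast⟩ := ih
    by_cases ha : a ∈ c :: l
    · obtain ⟨s, t, hst⟩ := List.append_of_mem ha
      refine ⟨t, hnd.sublist (hst ▸ List.sublist_append_right _ _),
        hch.suffix (hst ▸ List.suffix_append _ _), ?_⟩
      rw [← hlast]
      simp only [hst, List.getLast_append_of_ne_nil _ (List.cons_ne_nil _ _)]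
    · exact ⟨c :: l, List.nodup_cons.mpr ⟨ha, hnd⟩, .cons_cons hac hch,
        by rwa [List.getLast_cons_cons]⟩

theorem rel_symm_of_not_hasLongCycle [Std.Irrefl r] (hcyc : ¬HasLongCycle r) {p q : α}
    (hpq : r p q) (hqp : ReflTransGen r q p) : r q p := by
  obtain ⟨l, hnd, hch, hlast⟩ := List.exists_nodup_isChain_cons_of_reflTransGen hqp
  match l, hnd, hch, hlast with
  | [], _, _, hlast =>
    rw [List.getLast_singleton] at hlast
    exact (Std.Irrefl.irrefl p (hlast ▸ hpq)).elim
  | [c], _, hch, hlast => exact hlast ▸ List.isChain_pair.mp hch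
  | c :: d :: l, hnd, hch, hlast =>
    refine absurd (hasLongCycle_of_isChain hnd hch (by simp) ?_) hcyc
    rwa [← List.getLast_eq_getElem (List.cons_ne_nil _ _), hlast]

theorem reflTransGen_and_of_reflTransGen [Std.Irrefl r] (hcyc : ¬HasLongCycle r) {x y : α}
    (hxy : ReflTransGen r x y) (hyx : ReflTransGen r y x) :
    ReflTransGen (fun u v => r u v ∧ r v u) x y := by
  induction hxy with
  | refl => exact .refl
  | @tail b c hxb hbc ih =>
    exact (ih (.head hbc hyx)).tail ⟨hbc, rel_symm_of_not_hasLongCycle hcyc hbc (hyx.trans hxb)⟩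

theorem hasT6_of_three_neighbours [Std.Irrefl r] {v a b c : α} (hva : r v a ∧ r a v)
    (hvb : r v b ∧ r b v) (hvc : r v c ∧ r c v) (hab : a ≠ b) (hac : a ≠ c) (hbc : b ≠ c) :
    HasT6 r :=
  ⟨a, v, b, c, fun h => Std.Irrefl.irrefl _ (h ▸ hva.1), hab, hac,
    fun h => Std.Irrefl.irrefl _ (h ▸ hvb.1), fun h => Std.Irrefl.irrefl _ (h ▸ hvc.1), hbc,
    hva.2, hva.1, hvb.1, hvc.1, hvb.2, hvc.2⟩

theorem exists_rel_of_reflTransGen {S : Set α} {a b : α} (h : ReflTransGen r a b) (ha : a ∈ S)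
    (hb : b ∉ S) : ∃ v w, v ∈ S ∧ w ∉ S ∧ r v w := by
  induction h with
  | refl => exact absurd ha hb
  | @tail c d _ hcd ih =>
    by_cases hc : c ∈ S
    · exact ⟨c, d, hc, hb, hcd⟩
    · exact ih hc

def componentPaths (r : α → α → Prop) (x₀ : α) : Set (List α) :=
  {P | P ≠ [] ∧ P.Nodup ∧ P.IsChain r ∧ ∀ y ∈ P, ReflTransGen r x₀ y}

theorem mem_of_reflTransGen_of_longest [Std.Symm r]
    (hdeg : ∀ v a b c, r v a → r v b → r v c → a ≠ b → a ≠ c → b ≠ c → False) {x₀ : α}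
    {P : List α} (hP : P ∈ componentPaths r x₀)
    (hmax : ∀ P' ∈ componentPaths r x₀, P'.length ≤ P.length) {y : α}
    (hy : ReflTransGen r x₀ y) : y ∈ P := by
  obtain ⟨hne, hnd, hch, hreach⟩ := hP
  by_contra hyP
  have hhead := List.head_mem hne
  obtain ⟨v, w, hv, hw, hvw⟩ := exists_rel_of_reflTransGen (S := {y | y ∈ P})
    ((Std.Symm.symm _ _ (hreach _ hhead)).trans hy) hhead hyP
  have hwreach : ReflTransGen r x₀ w := (hreach v hv).tail hvw
  obtain ⟨i, hi, rfl⟩ := List.getElem_of_mem hv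
  rcases Nat.eq_zero_or_pos i with rfl | hi0
  · have := hmax (w :: P) ⟨by simp, List.nodup_cons.mpr ⟨hw, hnd⟩,
      hch.cons_of_ne_nil hne (by simpa [List.head_eq_getElem] using Std.Symm.symm _ _ hvw),
      List.forall_mem_cons.mpr ⟨hwreach, hreach⟩⟩
    simp at this
  rcases (by omega : i = P.length - 1 ∨ i + 1 < P.length) with rfl | hi1
  · have := hmax (P ++ [w]) ⟨by simp, by simpa using hnd.concat hw,
      hch.append (.singleton _)
        (by simp [List.getLast?_eq_getElem?, List.getElem?_eq_getElem hi, hvw]),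
      List.forall_mem_append.mpr ⟨hreach, by simpa using hwreach⟩⟩
    simp at this
  · have hprev := List.isChain_iff_getElem.mp hch (i - 1) (by omega)
    have hnext := List.isChain_iff_getElem.mp hch i hi1
    simp only [Nat.sub_add_cancel hi0] at hprev
    exact hdeg _ _ _ w (Std.Symm.symm _ _ hprev) hnext hvw
      (fun h => by have := (List.Nodup.getElem_inj_iff hnd).mp h; omega)
      (fun h => hw (h ▸ List.getElem_mem _)) (fun h => hw (h ▸ List.getElem_mem _))

theorem idxOf_eq_succ_of_rel [DecidableEq α] [Std.Symm r] (hcyc : ¬HasLongCycle r)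
    {P : List α} (hnd : P.Nodup) (hch : P.IsChain r) {u v : α} (huv : r u v) (hv : v ∈ P)
    (hlt : P.idxOf u < P.idxOf v) : P.idxOf v = P.idxOf u + 1 := by
  by_contra hne
  exact hcyc (hasLongCycle_of_isChain_of_rel hnd hch (i := P.idxOf u) (by omega)
    (List.idxOf_lt_length_iff.mpr hv) (by simpa using huv))

theorem exists_path_labelling [Finite α] [Std.Symm r] [Std.Irrefl r] (hcyc : ¬HasLongCycle r)
    (hdeg : ∀ v a b c, r v a → r v b → r v c → a ≠ b → a ≠ c → b ≠ c → False) (x₀ : α) :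
    ∃ ψ : α → ℕ, Set.InjOn ψ {y | ReflTransGen r x₀ y} ∧
      ∀ u v, ReflTransGen r x₀ u → r u v → ψ v = ψ u + 1 ∨ ψ u = ψ v + 1 := by
  classical
  have := Fintype.ofFinite α
  have hfin : (componentPaths r x₀).Finite :=
    (List.finite_length_le α (Fintype.card α)).subset fun P hP => hP.2.1.length_le_card
  obtain ⟨P, hP, hmax⟩ := Set.exists_max_image _ List.length hfin
    ⟨[x₀], by simp, by simp, .singleton _, by simp [ReflTransGen.refl]⟩
  have hcover := fun {y} => mem_of_reflTransGen_of_longest hdeg hP hmax (y := y)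
  refine ⟨fun y => P.idxOf y, fun y hy z _ h => (List.idxOf_inj (hcover hy)).mp h, ?_⟩
  intro u v hu huv
  have hu' := hcover hu
  have hv' := hcover (hu.tail huv)
  have hne : P.idxOf u ≠ P.idxOf v :=
    fun h => Std.Irrefl.irrefl u (((List.idxOf_inj hu').mp h).symm ▸ huv)
  rcases lt_or_gt_of_ne hne with h | h
  · exact .inl (idxOf_eq_succ_of_rel hcyc hP.2.1 hP.2.2.1 huv hv' h)
  · exact .inr (idxOf_eq_succ_of_rel hcyc hP.2.1 hP.2.2.1 (Std.Symm.symm _ _ huv) hu' h)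

end Relations

section Unitary

variable {Q : Type*} [DecidableEq Q]

@[simp]
theorem unitaryT_apply_self (p q : Q) : unitaryT p q p = q := if_pos rfl

theorem unitaryT_apply_of_ne {p r : Q} (q : Q) (h : r ≠ p) : unitaryT p q r = r := if_neg h

theorem unitaryT_self (p : Q) : unitaryT p p = 1 :=
  funext fun r => by
    show (if r = p then p else r) = r
    split_ifs with h
    exacts [h.symm, rfl]

def IsUnitarySet (T : Set (Function.End Q)) : Prop :=
  ∀ t ∈ T, ∃ p q : Q, p ≠ q ∧ t = unitaryT p q

def unitaryEdge (T : Set (Function.End Q)) (p q : Q) : Prop := unitaryT p q ∈ T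

variable {T : Set (Function.End Q)}

theorem IsUnitarySet.irrefl (hT : IsUnitarySet T) : Std.Irrefl (unitaryEdge T) := by
  refine ⟨fun a ha => ?_⟩
  obtain ⟨p, q, hpq, hpq'⟩ := hT _ ha
  have := congr_fun (hpq'.symm.trans (unitaryT_self a)) p
  rw [unitaryT_apply_self] at this
  exact hpq this.symm

theorem IsUnitarySet.reflTransGen_apply (hT : IsUnitarySet T) {g : Function.End Q}
    (hg : g ∈ Subsemigroup.closure T) (z : Q) : ReflTransGen (unitaryEdge T) z (g z) := by
  induction hg using Subsemigroup.closure_induction generalizing z with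
  | mem t ht =>
    obtain ⟨p, q, -, rfl⟩ := hT t ht
    by_cases hz : z = p
    · subst hz; rw [unitaryT_apply_self]; exact .single ht
    · rw [unitaryT_apply_of_ne q hz]
  | mul g h _ _ ihg ihh => exact (ihh z).trans (ihg (h z))

theorem IsUnitarySet.reflTransGen_pow_apply (hT : IsUnitarySet T) {s : Function.End Q}
    (hs : s ∈ Subsemigroup.closure T) (i : ℕ) (z : Q) :
    ReflTransGen (unitaryEdge T) z ((s ^ i) z) := by
  induction i with
  | zero => exact .refl
  | succ i ih =>
    rw [Function.End.pow_succ_apply]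
    exact ih.trans (hT.reflTransGen_apply hs _)

theorem IsUnitarySet.reflTransGen_of_pow_apply_eq_self (hT : IsUnitarySet T)
    {s : Function.End Q} (hs : s ∈ Subsemigroup.closure T) {n : ℕ} (hn : 0 < n) {x : Q}
    (hx : (s ^ n) x = x) (i : ℕ) : ReflTransGen (unitaryEdge T) ((s ^ i) x) x := by
  have hi : i ≤ n * (i + 1) := by nlinarith
  have := hT.reflTransGen_pow_apply hs (n * (i + 1) - i) ((s ^ i) x)
  rwa [← Function.End.pow_add_apply, Nat.sub_add_cancel hi,
    Function.End.pow_mul_apply_of_pow_apply hx] at this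

theorem IsUnitarySet.le_apply (hT : IsUnitarySet T) {C : Set Q}
    (hC : ∀ a b c, a ∈ C → c ∈ C → ReflTransGen (unitaryEdge T) a b →
      ReflTransGen (unitaryEdge T) b c → b ∈ C)
    {ψ : Q → ℕ} (hψ : Set.InjOn ψ C)
    (hadj : ∀ p q, p ∈ C → q ∈ C → unitaryEdge T p q → ψ q = ψ p + 1 ∨ ψ p = ψ q + 1)
    {g : Function.End Q} (hg : g ∈ Subsemigroup.closure T) {a b : Q} (ha : a ∈ C) (hb : b ∈ C)
    (hga : g a ∈ C) (hgb : g b ∈ C) (hab : ψ a ≤ ψ b) : ψ (g a) ≤ ψ (g b) := by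
  induction hg using Subsemigroup.closure_induction generalizing a b with
  | mem t ht =>
    obtain ⟨p, q, -, rfl⟩ := hT t ht
    have hedge : unitaryEdge T p q := ht
    by_cases hap : a = p <;> by_cases hbp : b = p
    · subst hap hbp; rfl
    · subst hap
      rw [unitaryT_apply_self] at hga ⊢
      rw [unitaryT_apply_of_ne q hbp]
      have : ψ a ≠ ψ b := fun h => hbp (hψ hb ha h.symm)
      have := hadj a q ha hga hedge
      omega
    · subst hbp
      rw [unitaryT_apply_self] at hgb ⊢
      rw [unitaryT_apply_of_ne q hap]
      have : ψ a ≠ ψ b := fun h => hap (hψ ha hb h)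
      have := hadj b q hb hgb hedge
      omega
    · rwa [unitaryT_apply_of_ne q hap, unitaryT_apply_of_ne q hbp]
  | mul g h hg hh ihg ihh =>
    have hmid : ∀ z, z ∈ C → g (h z) ∈ C → h z ∈ C := fun z hz hghz =>
      hC _ _ _ hz hghz (hT.reflTransGen_apply hh z) (hT.reflTransGen_apply hg (h z))
    exact ihg (hmid a ha hga) (hmid b hb hgb) hga hgb
      (ihh ha hb (hmid a ha hga) (hmid b hb hgb) hab)

theorem IsUnitarySet.apply_eq_self_of_pow_apply_eq_self [Finite Q] (hT : IsUnitarySet T)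
    (hcyc : ¬HasLongCycle (unitaryEdge T)) (hT6 : ¬HasT6 (unitaryEdge T))
    {s : Function.End Q} (hs : s ∈ Subsemigroup.closure T) {n : ℕ} (hn : 0 < n) {x : Q}
    (hx : (s ^ n) x = x) : s x = x := by
  let E := unitaryEdge T
  have := hT.irrefl
  let A : Q → Q → Prop := fun u v => E u v ∧ E v u
  have : Std.Symm A := ⟨fun _ _ h => h.symm⟩
  have : Std.Irrefl A := ⟨fun a h => Std.Irrefl.irrefl a h.1⟩
  obtain ⟨ψ, hinj, hadj⟩ := exists_path_labelling (r := A)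
    (fun h => hcyc (h.mono fun _ _ => And.left))
    (fun _ _ _ _ hva hvb hvc hab hac hbc => hT6 (hasT6_of_three_neighbours hva hvb hvc hab hac hbc))
    x
  let C : Set Q := {y | ReflTransGen E x y ∧ ReflTransGen E y x}
  have hCA : ∀ p q, p ∈ C → q ∈ C → E p q → A p q := fun p q hp hq hpq =>
    ⟨hpq, rel_symm_of_not_hasLongCycle hcyc hpq (hq.2.trans hp.1)⟩
  have hC : C ⊆ {y | ReflTransGen A x y} := fun y hy =>
    reflTransGen_and_of_reflTransGen hcyc hy.1 hy.2
  have horbit : ∀ i, (s ^ i) x ∈ C := fun i =>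
    ⟨hT.reflTransGen_pow_apply hs i x, hT.reflTransGen_of_pow_apply_eq_self hs hn hx i⟩
  have hmono := fun {a b : Q} => hT.le_apply (C := C)
    (fun a b c ha hc hab hbc => ⟨ha.1.trans hab, hbc.trans hc.2⟩) (hinj.mono hC)
    (fun p q hp hq hpq => hadj p q (hC hp) (hCA p q hp hq hpq)) hs (a := a) (b := b)
  have key := apply_one_eq_apply_zero_of_periodic (f := fun i => ψ ((s ^ i) x))
    (fun i j hij => by
      simp only [Function.End.pow_succ_apply]
      exact hmono (horbit i) (horbit j) (Function.End.pow_succ_apply s i x ▸ horbit (i + 1))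
        (Function.End.pow_succ_apply s j x ▸ horbit (j + 1)) hij)
    hn (congrArg ψ hx)
  exact hinj.mono hC (horbit 1) (horbit 0) key

def unitarySweep (g : ℕ → Q) : ℕ → Function.End Q
  | 0 => 1
  | n + 1 => unitarySweep g n * unitaryT (g n) (g (n + 1))

theorem unitarySweep_apply_of_forall_ne {g : ℕ → Q} {n : ℕ} {x : Q} (h : ∀ i < n, x ≠ g i) :
    unitarySweep g n x = x := by
  induction n with
  | zero => rfl
  | succ n ih =>
    rw [unitarySweep, Function.End.mul_apply, unitaryT_apply_of_ne _ (h n n.lt_succ_self)]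
    exact ih fun i hi => h i (by omega)

theorem unitarySweep_apply_of_lt {g : ℕ → Q} {n i : ℕ} (hg : Set.InjOn g (Set.Iic n))
    (hi : i < n) : unitarySweep g n (g i) = g (i + 1) := by
  induction n with
  | zero => omega
  | succ n ih =>
    rw [unitarySweep, Function.End.mul_apply]
    rcases (by omega : i = n ∨ i < n) with rfl | hin
    · rw [unitaryT_apply_self]
      exact unitarySweep_apply_of_forall_ne fun j hj h => by
        have := hg (by simp) (by simp; omega) h; omega
    · rw [unitaryT_apply_of_ne _ fun h => by
        have := hg (by simp; omega) (by simp) h; omega]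
      exact ih (hg.mono (Set.Iic_subset_Iic.mpr n.le_succ)) hin

theorem unitarySweep_succ_mem_closure {g : ℕ → Q} (hg : ∀ i, unitaryEdge T (g i) (g (i + 1)))
    (n : ℕ) : unitarySweep g (n + 1) ∈ Subsemigroup.closure T := by
  induction n with
  | zero => simpa [unitarySweep] using Subsemigroup.subset_closure (hg 0)
  | succ n ih => exact Subsemigroup.mul_mem _ ih (Subsemigroup.subset_closure (hg _))

theorem exists_pow_apply_eq_ne_of_hasLongCycle (h : HasLongCycle (unitaryEdge T)) :
    ∃ s ∈ Subsemigroup.closure T, ∃ n x, 0 < n ∧ (s ^ n) x = x ∧ s x ≠ x := by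
  obtain ⟨k, hk, q, hq, hedge⟩ := h
  obtain ⟨m, rfl⟩ : ∃ m, k = m + 3 := ⟨k - 3, by omega⟩
  let g : ℕ → Q := fun i => q ⟨i % (m + 3), Nat.mod_lt _ (by omega)⟩
  have hgedge : ∀ i, unitaryEdge T (g i) (g (i + 1)) := fun i => by
    convert hedge ⟨i % (m + 3), Nat.mod_lt _ (by omega)⟩ using 3
    exact ((Fin.val_add _ _).trans (Nat.mod_add_mod _ _ _)).symm
  have hginj : ∀ i j, i < m + 3 → j < m + 3 → g i = g j → i = j := fun i j hi hj h => by
    simpa [Nat.mod_eq_of_lt hi, Nat.mod_eq_of_lt hj] using hq h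
  have hInj : Set.InjOn g (Set.Iic (m + 2)) := fun i hi j hj h =>
    hginj i j (by simp at hi; omega) (by simp at hj; omega) h
  set s := unitarySweep g (m + 3) with hs
  have hstep : ∀ i, 1 ≤ i → i ≤ m + 1 → s (g i) = g (i + 1) := fun i h1 h2 => by
    rw [hs, unitarySweep, Function.End.mul_apply,
      unitaryT_apply_of_ne _ fun h => by have := hginj _ _ (by omega) (by omega) h; omega,
      unitarySweep_apply_of_lt hInj (by omega)]
  have hlast : s (g (m + 2)) = g 1 := by
    rw [hs, unitarySweep, Function.End.mul_apply, unitaryT_apply_self,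
      show g (m + 2 + 1) = g 0 by simp [g], unitarySweep_apply_of_lt hInj (by omega)]
  have hpow : ∀ j ≤ m + 1, (s ^ j) (g 1) = g (j + 1) := by
    intro j hj
    induction j with
    | zero => rfl
    | succ j ih => rw [Function.End.pow_succ_apply, ih (by omega), hstep _ (by omega) hj]
  refine ⟨s, unitarySweep_succ_mem_closure hgedge _, m + 2, g 1, by omega, ?_, ?_⟩
  · rw [Function.End.pow_succ_apply, hpow _ le_rfl, hlast]
  · rw [hstep 1 le_rfl (by omega)]
    exact fun h => absurd (hginj _ _ (by omega) (by omega) h) (by omega)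

theorem exists_pow_apply_eq_ne_of_hasT6 (h : HasT6 (unitaryEdge T)) :
    ∃ s ∈ Subsemigroup.closure T, ∃ n x, 0 < n ∧ (s ^ n) x = x ∧ s x ≠ x := by
  obtain ⟨q0, q1, q2, q3, h01, h02, h03, h12, h13, h23, e01, e10, e12, e13, e21, e31⟩ := h
  have mem := fun {t} (ht : t ∈ T) => Subsemigroup.subset_closure (s := T) ht
  set u := unitaryT q1 q3 * unitaryT q2 q1 * unitaryT q1 q0 * unitaryT q3 q1 *
    unitaryT q1 q2 * unitaryT q0 q1
  have hu0 : u q0 = q3 := by simp [u, Function.End.mul_apply, unitaryT, h23, h12.symm]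
  have hu3 : u q3 = q0 := by
    simp [u, Function.End.mul_apply, unitaryT, h01, h02, h03.symm, h13.symm]
  refine ⟨u, ?_, 2, q0, two_pos, by rw [sq, Function.End.mul_apply, hu0, hu3],
    hu0.trans_ne h03.symm⟩
  exact mul_mem (mul_mem (mul_mem (mul_mem (mul_mem (mem e13) (mem e21)) (mem e10))
    (mem e31)) (mem e12)) (mem e01)

end Unitary

/-- For a set `T` of unitary transformations of a finite set `Q`, the subsemigroup
generated by `T` is aperiodic if and only if `T` contains no `k`-cyclic subset with
`k ≥ 3` and no subset of type `T6`. -/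
theorem statement10 {Q : Type*} [Finite Q] [DecidableEq Q] (T : Set (Function.End Q))
    (hT : ∀ t ∈ T, ∃ p q : Q, p ≠ q ∧ t = unitaryT p q) :
    (∀ s ∈ Subsemigroup.closure T, ∃ k : ℕ, 1 ≤ k ∧ s ^ (k + 1) = s ^ k) ↔
      (¬ ∃ (k : ℕ) (hk : 3 ≤ k) (q : Fin k → Q), Function.Injective q ∧
          ∀ i : Fin k, unitaryT (q i) (q (i + ⟨1, by omega⟩)) ∈ T) ∧
      (¬ ∃ q0 q1 q2 q3 : Q,
          q0 ≠ q1 ∧ q0 ≠ q2 ∧ q0 ≠ q3 ∧ q1 ≠ q2 ∧ q1 ≠ q3 ∧ q2 ≠ q3 ∧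
          unitaryT q0 q1 ∈ T ∧ unitaryT q1 q0 ∈ T ∧ unitaryT q1 q2 ∈ T ∧
          unitaryT q1 q3 ∈ T ∧ unitaryT q2 q1 ∈ T ∧ unitaryT q3 q1 ∈ T) := by
  simp only [Function.End.exists_pow_succ_eq_pow_iff]
  change _ ↔ ¬HasLongCycle (unitaryEdge T) ∧ ¬HasT6 (unitaryEdge T)
  refine ⟨fun hap => ⟨fun hcyc => ?_, fun hT6 => ?_⟩, fun ⟨hcyc, hT6⟩ s hs n x hn hx =>
    IsUnitarySet.apply_eq_self_of_pow_apply_eq_self hT hcyc hT6 hs hn hx⟩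
  · obtain ⟨s, hs, n, x, hn, hx, hsx⟩ := exists_pow_apply_eq_ne_of_hasLongCycle hcyc
    exact hsx (hap s hs n x hn hx)
  · obtain ⟨s, hs, n, x, hn, hx, hsx⟩ := exists_pow_apply_eq_ne_of_hasT6 hT6
    exact hsx (hap s hs n x hn hx)
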